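/- Let G be a connected weighted graph on n vertices with all degrees positive which is not a complete weighted graph (equivalently 0 < λ_1 < λ_{n−1}). Then diam(G) ≤ ⌈ log(vol(G)/δ) / log((λ_{n−1}+λ_1)/(λ_{n−1}−λ_1)) ⌉, where δ is the minimum degree of G. -/

import Mathlib

open Matrix Polynomial

noncomputable section

/-- The degree of a vertex in a weighted graph with weight function `w`. -/
def wdeg {V : Type*} [Fintype V] (w : V → V → ℝ) (x : V) : ℝ := ∑ y, w x y

/-- The diagonal matrix `T^{-1/2}` of a weighted graph. -/
def invSqrtT {V : Type*} [Fintype V] [DecidableEq V] (w : V → V → ℝ) : Matrix V V ℝ :=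
  Matrix.diagonal fun x => (Real.sqrt (wdeg w x))⁻¹

/-- The (normalized) Laplacian `I - T^{-1/2} A T^{-1/2}` of a weighted graph. -/
def wLap {V : Type*} [Fintype V] [DecidableEq V] (w : V → V → ℝ) : Matrix V V ℝ :=
  1 - invSqrtT w * Matrix.of w * invSqrtT w

/-- The volume of a set of vertices of a weighted graph. -/
def wvol {V : Type*} [Fintype V] (w : V → V → ℝ) (X : Finset V) : ℝ := ∑ x ∈ X, wdeg w x

/-- `μ` lists the eigenvalues of the square matrix `M` (with multiplicity)
in non-decreasing order. -/
def IsEigenSeq {m : Type*} [Fintype m] [DecidableEq m] (M : Matrix m m ℝ) {n : ℕ}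
    (μ : Fin n → ℝ) : Prop :=
  Monotone μ ∧ M.charpoly = ∏ i, (X - C (μ i))

/-- The underlying simple graph of a weighted graph: vertices are adjacent when the
weight between them is positive (for a symmetric weight with zero diagonal this is
the usual adjacency). -/
def wGraph {V : Type*} (w : V → V → ℝ) : SimpleGraph V where
  Adj x y := x ≠ y ∧ 0 < w x y ∧ 0 < w y x
  symm := ⟨fun _ _ ⟨h1, h2, h3⟩ => ⟨h1.symm, h3, h2⟩⟩
  loopless := ⟨fun _ h => h.1 rfl⟩


/-- The diameter of a weighted graph: the maximum graph distance between two vertices. -/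
def wDiam {V : Type*} (w : V → V → ℝ) : ℕ :=
  sSup {k | ∃ x y : V, (wGraph w).dist x y = k}

/-!
Put `p(x) = (1 - 2x / (λ₁ + λₙ₋₁))^t`. Off the diagonal the Laplacian is supported on the edges,
so the `(u, v)` entry of `p(L)` vanishes once `d(u, v) > t`. In an orthonormal eigenbasis `φⱼ`
with eigenvalues `ξⱼ` that entry is `∑ⱼ p(ξⱼ) φⱼ(u) φⱼ(v)`. Since `λ₁ > 0`, the eigenvalue `0`
is simple with eigenvector `T^{1/2} 𝟙`, so its term is `√(d_u d_v) / vol(G) ≥ δ / vol(G)`. All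
other eigenvalues lie in `[λ₁, λₙ₋₁]`, where `|p| ≤ ((λₙ₋₁ - λ₁) / (λₙ₋₁ + λ₁))^t`, and by AM-GM
the remaining products `φⱼ(u) φⱼ(v)` have absolute sum at most `1 - δ / vol(G)`. For `t` the
ceiling in the statement the first term dominates, so the entry is positive and `d(u, v) ≤ t`.
-/

namespace Matrix

variable {V R : Type*} [Fintype V] [DecidableEq V] [CommSemiring R]

lemma exists_walk_length_le_of_pow_apply_ne_zero {G : SimpleGraph V} {M : Matrix V V R}
    (hM : ∀ x y, x ≠ y → ¬G.Adj x y → M x y = 0) {k : ℕ} {u v : V} (h : (M ^ k) u v ≠ 0) :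
    ∃ p : G.Walk u v, p.length ≤ k := by
  induction k generalizing u with
  | zero =>
    obtain rfl : u = v := by by_contra huv; exact h (by simp [one_apply_ne huv])
    exact ⟨.nil, le_rfl⟩
  | succ k ih =>
    rw [pow_succ', mul_apply] at h
    obtain ⟨x, -, hx⟩ := Finset.exists_ne_zero_of_sum_ne_zero h
    obtain ⟨p, hp⟩ := ih (right_ne_zero_of_mul hx)
    by_cases hux : u = x
    · subst hux; exact ⟨p, hp.trans k.le_succ⟩
    · have hadj : G.Adj u x := by_contra fun hadj => left_ne_zero_of_mul hx (hM u x hux hadj)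
      exact ⟨.cons hadj p, by simpa using hp⟩

lemma aeval_apply_eq_zero_of_natDegree_lt_dist {G : SimpleGraph V} {M : Matrix V V R}
    (hM : ∀ x y, x ≠ y → ¬G.Adj x y → M x y = 0) (p : R[X]) {u v : V}
    (h : p.natDegree < G.dist u v) : aeval M p u v = 0 := by
  by_contra hne
  rw [aeval_eq_sum_range, sum_apply] at hne
  obtain ⟨i, hi, hne⟩ := Finset.exists_ne_zero_of_sum_ne_zero hne
  rw [smul_apply, smul_eq_mul] at hne
  obtain ⟨q, hq⟩ := exists_walk_length_le_of_pow_apply_ne_zero hM (right_ne_zero_of_mul hne)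
  have := (SimpleGraph.dist_le q).trans hq
  simp only [Finset.mem_range] at hi
  omega

end Matrix

namespace Matrix.IsHermitian

variable {V : Type*} [Fintype V] [DecidableEq V] {A : Matrix V V ℝ} (hA : A.IsHermitian)

lemma aeval_apply_eq_sum (p : ℝ[X]) (u v : V) :
    aeval A p u v =
      ∑ j, p.eval (hA.eigenvalues j) * (hA.eigenvectorBasis j u * hA.eigenvectorBasis j v) := by
  have hdiag : aeval (diagonal hA.eigenvalues) p = diagonal fun j => p.eval (hA.eigenvalues j) := by
    rw [← diagonalAlgHom_apply (R := ℝ), aeval_algHom_apply, aeval_pi_apply]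
    rfl
  conv_lhs => rw [hA.spectral_theorem]
  rw [aeval_algHom_apply, RCLike.ofReal_real_eq_id, Function.id_comp, hdiag,
    Unitary.conjStarAlgAut_apply]
  simp [mul_apply, diagonal_apply, mul_comm, mul_assoc]

lemma sum_eigenvectorBasis_apply_sq (x : V) : ∑ j, hA.eigenvectorBasis j x ^ 2 = 1 := by
  have h := congrFun (congrFun (mem_unitaryGroup_iff.mp hA.eigenvectorUnitary.2) x) x
  simpa [mul_apply, sq] using h

lemma sum_eigenvectorBasis_sq (j : V) : ∑ x, hA.eigenvectorBasis j x ^ 2 = 1 := by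
  have h := congrFun (congrFun (mem_unitaryGroup_iff'.mp hA.eigenvectorUnitary.2) j) j
  simpa [mul_apply, sq] using h

lemma eigenvectorBasis_mul_eigenvectorBasis_of_mulVec_eq_zero {φ : V → ℝ} (hφ : A *ᵥ φ = 0)
    (hφ0 : φ ≠ 0) {j₀ : V} (hj₀ : ∀ j ≠ j₀, hA.eigenvalues j ≠ 0) (x y : V) :
    hA.eigenvectorBasis j₀ x * hA.eigenvectorBasis j₀ y = φ x * φ y / ∑ z, φ z ^ 2 := by
  set ψ : V → ℝ := fun j => hA.eigenvectorBasis j ⬝ᵥ φ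
  have hψ : ∀ j ≠ j₀, ψ j = 0 := by
    intro j hj
    have hAt : Aᵀ = A := by simpa [conjTranspose_eq_transpose_of_trivial] using hA.eq
    have : hA.eigenvalues j * ψ j = 0 := by
      rw [← smul_eq_mul, ← smul_dotProduct, ← hA.mulVec_eigenvectorBasis, dotProduct_comm,
        dotProduct_mulVec, ← mulVec_transpose, hAt, hφ, zero_dotProduct]
    exact (mul_eq_zero.mp this).resolve_left (hj₀ j hj)
  have hexp : ∀ z, φ z = hA.eigenvectorBasis j₀ z * ψ j₀ := by
    set U : Matrix V V ℝ := (hA.eigenvectorUnitary : Matrix V V ℝ)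
    have hψU : star U *ᵥ φ = ψ := by ext j; simp [U, ψ, mulVec, dotProduct]
    have hφU : U *ᵥ ψ = φ := by
      rw [← hψU, mulVec_mulVec, mem_unitaryGroup_iff.mp hA.eigenvectorUnitary.2, one_mulVec]
    intro z
    rw [← hφU, mulVec, dotProduct, Finset.sum_eq_single j₀ fun j _ hj => by rw [hψ j hj, mul_zero]]
    · rfl
    · simp
  have hψ0 : ψ j₀ ≠ 0 := fun h => hφ0 (funext fun z => by rw [Pi.zero_apply, hexp z, h, mul_zero])
  have hnorm : ∑ z, φ z ^ 2 = ψ j₀ ^ 2 := by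
    simp_rw [hexp, mul_pow, ← Finset.sum_mul, hA.sum_eigenvectorBasis_sq, one_mul]
  rw [hnorm, hexp x, hexp y]
  field_simp

lemma exists_eigenvalues_eq_zero {φ : V → ℝ} (hφ : A *ᵥ φ = 0) (hφ0 : φ ≠ 0) :
    ∃ j, hA.eigenvalues j = 0 := by
  have hdet : A.det = 0 := exists_mulVec_eq_zero_iff.mp ⟨φ, hφ0, hφ⟩
  simpa [hA.det_eq_prod_eigenvalues, Finset.prod_eq_zero_iff] using hdet

end Matrix.IsHermitian

lemma IsEigenSeq.map_eigenvalues {V : Type*} [Fintype V] [DecidableEq V] {A : Matrix V V ℝ}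
    (hA : A.IsHermitian) {n : ℕ} {μ : Fin n → ℝ} (hμ : IsEigenSeq A μ) :
    Finset.univ.val.map hA.eigenvalues = Finset.univ.val.map μ := by
  have h := hA.roots_charpoly_eq_eigenvalues
  rw [hμ.2, roots_prod _ _ (by simp [Finset.prod_ne_zero_iff, X_sub_C_ne_zero])] at h
  simpa using h.symm

lemma mem_Icc_of_map_univ_eq {ι : Type*} [Fintype ι] {n : ℕ} (h1n : 1 < n) {μ : Fin n → ℝ}
    (hμ : Monotone μ) (hμ1 : 0 < μ ⟨1, h1n⟩) {ξ : ι → ℝ}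
    (hξμ : Finset.univ.val.map ξ = Finset.univ.val.map μ) {j₀ : ι} (hj₀ : ξ j₀ = 0) {j : ι}
    (hj : j ≠ j₀) : ξ j ∈ Set.Icc (μ ⟨1, h1n⟩) (μ ⟨n - 1, by omega⟩) := by
  have hμ0 : ∀ i, μ i = 0 → i.val = 0 := fun i hi => by
    by_contra hne
    linarith [hμ (Fin.mk_le_of_le_val (by omega) : (⟨1, h1n⟩ : Fin n) ≤ i)]
  have hmem : ∀ k, ∃ i, μ i = ξ k := fun k => by
    have h : ξ k ∈ Finset.univ.val.map μ :=
      hξμ ▸ Multiset.mem_map_of_mem ξ (Finset.mem_univ_val k)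
    simpa using h
  have hcard : (Finset.univ.filter fun k => ξ k = 0).card ≤ 1 := by
    have h := congrArg (fun s => Multiset.card (s.filter (· = 0))) hξμ
    simp only [Multiset.filter_map, Multiset.card_map] at h
    change (Finset.univ.filter fun k => ξ k = 0).card =
      (Finset.univ.filter fun i => μ i = 0).card at h
    rw [h, Finset.card_le_one]
    intro a ha b hb
    exact Fin.ext
      ((hμ0 a (Finset.mem_filter.mp ha).2).trans (hμ0 b (Finset.mem_filter.mp hb).2).symm)
  have hξj : ξ j ≠ 0 := fun h =>
    hj (Finset.card_le_one.mp hcard j (by simp [h]) j₀ (by simp [hj₀]))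
  obtain ⟨i, hi⟩ := hmem j
  obtain ⟨i₀, hi₀⟩ := hmem j₀
  have hi1 : 1 ≤ i.val := by
    by_contra h0
    have : i = i₀ := Fin.ext (by rw [hμ0 i₀ (hi₀.trans hj₀)]; omega)
    exact hξj (by rw [← hi, this, hi₀, hj₀])
  rw [← hi]
  exact ⟨hμ (Fin.mk_le_of_le_val hi1), hμ (Fin.le_def.mpr (by simp; omega))⟩

lemma abs_one_sub_two_div_mul_le {a b x : ℝ} (hab : 0 < b + a) (hx : x ∈ Set.Icc a b) :
    |1 - 2 / (b + a) * x| ≤ (b - a) / (b + a) := by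
  rw [show 1 - 2 / (b + a) * x = (b + a - 2 * x) / (b + a) by field_simp, abs_div,
    abs_of_pos hab]
  exact div_le_div_of_nonneg_right (abs_le.mpr ⟨by linarith [hx.2], by linarith [hx.1]⟩) hab.le

lemma pow_le_inv_of_log_div_log_inv_le {q x : ℝ} {t : ℕ} (hq0 : 0 < q) (hq1 : q < 1)
    (hx : 0 < x) (ht : Real.log x / Real.log q⁻¹ ≤ t) : q ^ t ≤ x⁻¹ := by
  have hlog : 0 < Real.log q⁻¹ := Real.log_pos (one_lt_inv_iff₀.mpr ⟨hq0, hq1⟩)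
  have : Real.log x ≤ Real.log ((q ^ t)⁻¹) := by
    rw [Real.log_inv, Real.log_pow, ← mul_neg, ← Real.log_inv]
    exact (div_le_iff₀ hlog).mp ht
  rw [le_inv_comm₀ (pow_pos hq0 t) hx]
  exact (Real.log_le_log_iff hx (by positivity)).mp this

lemma sum_mul_mul_pos_of_dominant {ι : Type*} [Fintype ι] [DecidableEq ι] {a b c : ι → ℝ}
    {j₀ : ι} {ε r : ℝ} (ha : ∑ j, a j ^ 2 = 1) (hb : ∑ j, b j ^ 2 = 1) (hc₀ : c j₀ = 1)
    (hc : ∀ j ≠ j₀, |c j| ≤ r) (hr : 0 ≤ r) (hab : ε ≤ a j₀ * b j₀) (ha₀ : ε ≤ a j₀ ^ 2)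
    (hb₀ : ε ≤ b j₀ ^ 2) (hrε : r * (1 - ε) < ε) :
    0 < ∑ j, c j * (a j * b j) := by
  have hterm : ∀ j ∈ Finset.univ.erase j₀,
      -(r * ((a j ^ 2 + b j ^ 2) / 2)) ≤ c j * (a j * b j) := by
    intro j hj
    have hamgm : |a j * b j| ≤ (a j ^ 2 + b j ^ 2) / 2 := by
      rw [abs_mul, ← sq_abs (a j), ← sq_abs (b j)]
      linarith [two_mul_le_add_sq |a j| |b j|]
    calc -(r * ((a j ^ 2 + b j ^ 2) / 2)) ≤ -(|c j| * |a j * b j|) := by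
          gcongr
          exact hc j (Finset.ne_of_mem_erase hj)
      _ ≤ c j * (a j * b j) := by rw [← abs_mul]; exact neg_abs_le _
  have hrest : ∑ j ∈ Finset.univ.erase j₀, (a j ^ 2 + b j ^ 2) / 2 ≤ 1 - ε := by
    rw [← Finset.sum_div, Finset.sum_add_distrib, Finset.sum_erase_eq_sub (Finset.mem_univ _),
      Finset.sum_erase_eq_sub (Finset.mem_univ _), ha, hb]
    linarith
  rw [← Finset.add_sum_erase _ _ (Finset.mem_univ j₀), hc₀, one_mul]
  have := Finset.sum_le_sum hterm
  rw [Finset.sum_neg_distrib, ← Finset.mul_sum] at this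
  nlinarith [mul_le_mul_of_nonneg_left hrest hr]

section WeightedGraph

variable {V : Type*} [Fintype V] {w : V → V → ℝ}

lemma sum_sqrt_wdeg_sq (hdegpos : ∀ x, 0 < wdeg w x) :
    ∑ x, √(wdeg w x) ^ 2 = wvol w Finset.univ :=
  Finset.sum_congr rfl fun x _ => Real.sq_sqrt (hdegpos x).le

variable [DecidableEq V]

lemma wLap_apply (x y : V) :
    wLap w x y = (1 : Matrix V V ℝ) x y - (√(wdeg w x))⁻¹ * w x y * (√(wdeg w y))⁻¹ := by
  rw [wLap, Matrix.sub_apply, invSqrtT, mul_diagonal, diagonal_mul, of_apply]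

lemma wLap_isHermitian (hsymm : ∀ u v, w u v = w v u) : (wLap w).IsHermitian := by
  refine Matrix.IsHermitian.ext fun x y => ?_
  rw [star_trivial, wLap_apply, wLap_apply, hsymm y x, ← transpose_apply (1 : Matrix V V ℝ) x y,
    transpose_one]
  ring

lemma wLap_apply_eq_zero_of_not_adj (hsymm : ∀ u v, w u v = w v u) (hnonneg : ∀ u v, 0 ≤ w u v)
    {x y : V} (hxy : x ≠ y) (hadj : ¬(wGraph w).Adj x y) : wLap w x y = 0 := by
  have hw : w x y = 0 := by
    by_contra hw
    have hpos : 0 < w x y := (hnonneg x y).lt_of_ne' hw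
    exact hadj ⟨hxy, hpos, hsymm x y ▸ hpos⟩
  rw [wLap_apply, hw, one_apply_ne hxy]
  ring

lemma wLap_mulVec_sqrt_wdeg (hdegpos : ∀ x, 0 < wdeg w x) :
    wLap w *ᵥ (fun x => √(wdeg w x)) = 0 := by
  ext x
  have hsqrt : ∀ y, √(wdeg w y) ≠ 0 := fun y => (Real.sqrt_pos.mpr (hdegpos y)).ne'
  have hM : ∑ y, (√(wdeg w x))⁻¹ * w x y * (√(wdeg w y))⁻¹ * √(wdeg w y) = √(wdeg w x) := by
    simp_rw [inv_mul_cancel_right₀ (hsqrt _), ← Finset.mul_sum]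
    rw [← wdeg, inv_mul_eq_iff_eq_mul₀ (hsqrt x), Real.mul_self_sqrt (hdegpos x).le]
  simp only [mulVec, dotProduct, wLap_apply, sub_mul, Finset.sum_sub_distrib, hM, one_apply,
    ite_mul, one_mul, zero_mul, Finset.sum_ite_eq, Finset.mem_univ, if_true, sub_self,
    Pi.zero_apply]

end WeightedGraph

lemma exists_wLap_kernel_eigenvector {V : Type*} [Fintype V] [DecidableEq V] {w : V → V → ℝ}
    (hA : (wLap w).IsHermitian) (hdegpos : ∀ x, 0 < wdeg w x) {n : ℕ} (h1n : 1 < n)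
    {μ : Fin n → ℝ} (hμ : IsEigenSeq (wLap w) μ) (hμ1 : 0 < μ ⟨1, h1n⟩) :
    ∃ j₀, hA.eigenvalues j₀ = 0 ∧
      (∀ j ≠ j₀, hA.eigenvalues j ∈ Set.Icc (μ ⟨1, h1n⟩) (μ ⟨n - 1, by omega⟩)) ∧
      ∀ x y, hA.eigenvectorBasis j₀ x * hA.eigenvectorBasis j₀ y =
        √(wdeg w x) * √(wdeg w y) / wvol w Finset.univ := by
  have hφ := wLap_mulVec_sqrt_wdeg hdegpos
  have hφ0 : (fun x => √(wdeg w x)) ≠ 0 := fun h => by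
    have hV : Fintype.card V = n := by simpa using congrArg Multiset.card (hμ.map_eigenvalues hA)
    obtain ⟨x⟩ : Nonempty V := Fintype.card_pos_iff.mp (by omega)
    exact (Real.sqrt_pos.mpr (hdegpos x)).ne' (congrFun h x)
  obtain ⟨j₀, hj₀⟩ := hA.exists_eigenvalues_eq_zero hφ hφ0
  have hIcc : ∀ j ≠ j₀, hA.eigenvalues j ∈ Set.Icc (μ ⟨1, h1n⟩) (μ ⟨n - 1, by omega⟩) :=
    fun j hj => mem_Icc_of_map_univ_eq h1n hμ.1 hμ1 (hμ.map_eigenvalues hA) hj₀ hj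
  refine ⟨j₀, hj₀, hIcc, fun x y => ?_⟩
  rw [hA.eigenvectorBasis_mul_eigenvectorBasis_of_mulVec_eq_zero hφ hφ0
    (fun j hj => (hμ1.trans_le (hIcc j hj).1).ne'), sum_sqrt_wdeg_sq hdegpos]

theorem wGraph_dist_le {V : Type*} [Fintype V] [DecidableEq V] {w : V → V → ℝ}
    (hsymm : ∀ u v, w u v = w v u) (hnonneg : ∀ u v, 0 ≤ w u v) (hdegpos : ∀ x, 0 < wdeg w x)
    {n : ℕ} (h1n : 1 < n) {μ : Fin n → ℝ} (hμ : IsEigenSeq (wLap w) μ) (hμ1 : 0 < μ ⟨1, h1n⟩)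
    {δ : ℝ} (hδ0 : 0 < δ) (hδ : ∀ x, δ ≤ wdeg w x) {t : ℕ}
    (ht : ((μ ⟨n - 1, by omega⟩ - μ ⟨1, h1n⟩) / (μ ⟨n - 1, by omega⟩ + μ ⟨1, h1n⟩)) ^ t
      ≤ δ / wvol w Finset.univ) (u v : V) :
    (wGraph w).dist u v ≤ t := by
  set lam1 := μ ⟨1, h1n⟩
  set lamn := μ ⟨n - 1, by omega⟩
  set vol := wvol w Finset.univ
  have hA := wLap_isHermitian hsymm
  obtain ⟨j₀, hj₀, hIcc, hcol⟩ := exists_wLap_kernel_eigenvector hA hdegpos h1n hμ hμ1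
  have hvol : 0 < vol := Finset.sum_pos (fun x _ => hdegpos x) ⟨u, Finset.mem_univ u⟩
  have hε : ∀ x y, δ / vol ≤ hA.eigenvectorBasis j₀ x * hA.eigenvectorBasis j₀ y := fun x y => by
    rw [hcol]
    gcongr
    calc δ = √δ * √δ := (Real.mul_self_sqrt hδ0.le).symm
      _ ≤ √(wdeg w x) * √(wdeg w y) := by gcongr <;> exact hδ _
  set q := (lamn - lam1) / (lamn + lam1)
  have hle : lam1 ≤ lamn := hμ.1 (Fin.mk_le_mk.mpr (by omega))
  have hq : 0 ≤ q := div_nonneg (by linarith) (by linarith)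
  set p : ℝ[X] := (1 - C (2 / (lamn + lam1)) * X) ^ t
  have hp : ∀ j ≠ j₀, |p.eval (hA.eigenvalues j)| ≤ q ^ t := fun j hj => by
    simp only [p, eval_pow, eval_sub, eval_one, eval_mul, eval_C, eval_X, abs_pow]
    exact pow_le_pow_left₀ (abs_nonneg _) (abs_one_sub_two_div_mul_le (by linarith) (hIcc j hj)) t
  by_contra! hlt
  have hzero := aeval_apply_eq_zero_of_natDegree_lt_dist
    (fun x y => wLap_apply_eq_zero_of_not_adj hsymm hnonneg) p
    ((show p.natDegree ≤ t by simp only [p]; compute_degree).trans_lt hlt)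
  rw [hA.aeval_apply_eq_sum] at hzero
  refine hzero.not_gt (sum_mul_mul_pos_of_dominant (hA.sum_eigenvectorBasis_apply_sq u)
    (hA.sum_eigenvectorBasis_apply_sq v) (by simp [p, hj₀]) hp (by positivity) (hε u v)
    ((hε u u).trans_eq (sq _).symm) ((hε v v).trans_eq (sq _).symm) ?_)
  have hεpos : 0 < δ / vol := by positivity
  rcases (pow_nonneg hq t).eq_or_lt with h | h
  · rw [← h, zero_mul]; exact hεpos
  · nlinarith [mul_pos h hεpos]

/-- eigenvalue bound on the diameter of a connected, non-complete
weighted graph. -/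
theorem stmt_2 {V : Type*} [Fintype V] [DecidableEq V]
    (w : V → V → ℝ)
    (hsymm : ∀ u v, w u v = w v u)
    (hnonneg : ∀ u v, 0 ≤ w u v)
    (hdegpos : ∀ x, 0 < wdeg w x)
    (n : ℕ) (hn2 : 2 ≤ n)
    (μ : Fin n → ℝ) (hμ : IsEigenSeq (wLap w) μ)
    (hlam1pos : 0 < μ ⟨1, by omega⟩)
    (hlamgap : μ ⟨1, by omega⟩ < μ ⟨n - 1, by omega⟩)
    (δ : ℝ) (hδ : IsLeast (Set.range (wdeg w)) δ) :
    (wDiam w : ℤ) ≤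
      ⌈Real.log (wvol w Finset.univ / δ) /
        Real.log ((μ ⟨n - 1, by omega⟩ + μ ⟨1, by omega⟩) /
          (μ ⟨n - 1, by omega⟩ - μ ⟨1, by omega⟩))⌉ := by
  have h1n : 1 < n := by omega
  obtain ⟨⟨x₀, rfl⟩, hmin⟩ := hδ
  have hvol : wdeg w x₀ ≤ wvol w Finset.univ :=
    Finset.single_le_sum (fun x _ => (hdegpos x).le) (Finset.mem_univ x₀)
  set lam1 := μ ⟨1, h1n⟩
  set lamn := μ ⟨n - 1, by omega⟩
  have hq0 : 0 < (lamn - lam1) / (lamn + lam1) := div_pos (by linarith) (by linarith)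
  have hq1 : (lamn - lam1) / (lamn + lam1) < 1 := (div_lt_one (by linarith)).mpr (by linarith)
  set a := Real.log (wvol w Finset.univ / wdeg w x₀) / Real.log ((lamn + lam1) / (lamn - lam1))
  have ha : 0 ≤ a := div_nonneg (Real.log_nonneg ((one_le_div (hdegpos x₀)).mpr hvol))
    (Real.log_nonneg ((one_le_div (by linarith)).mpr (by linarith)))
  obtain ⟨t, ht⟩ : ∃ t : ℕ, (t : ℤ) = ⌈a⌉ := ⟨_, Int.toNat_of_nonneg (Int.ceil_nonneg ha)⟩
  have hqt : ((lamn - lam1) / (lamn + lam1)) ^ t ≤ wdeg w x₀ / wvol w Finset.univ := by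
    rw [← inv_div (wvol w Finset.univ)]
    refine pow_le_inv_of_log_div_log_inv_le hq0 hq1
      (div_pos ((hdegpos x₀).trans_le hvol) (hdegpos x₀)) ?_
    rw [inv_div]
    exact_mod_cast ht ▸ Int.le_ceil a
  rw [← ht, Nat.cast_le]
  exact csSup_le' fun k ⟨x, y, hk⟩ => hk ▸ wGraph_dist_le hsymm hnonneg hdegpos h1n hμ hlam1pos
    (hdegpos x₀) (fun x => hmin ⟨x, rfl⟩) hqt x y
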